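/- Characterization of membership in a minimal trap space: for a Boolean network f and a configuration x, x belongs to some minimal trap space of f if and only if for every configuration y ∈ c(TS_f(x)) one has c(TS_f(y)) = c(TS_f(x)). -/

import Mathlib

/-- The set of vertices of a subcube `h : Fin n → Option Bool`. -/
def vertices {n : ℕ} (h : Fin n → Option Bool) : Set (Fin n → Bool) :=
  {x | ∀ (i : Fin n) (b : Bool), h i = some b → x i = b}

/-- A subcube `h` is a trap space of the Boolean network `f` if it is closed by `f`. -/
def IsTrapSpace {n : ℕ} (f : (Fin n → Bool) → (Fin n → Bool))
    (h : Fin n → Option Bool) : Prop :=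
  ∀ x ∈ vertices h, f x ∈ vertices h

/-- A trap space is minimal if no trap space has a strictly smaller vertex set. -/
def IsMinimalTrapSpace {n : ℕ} (f : (Fin n → Bool) → (Fin n → Bool))
    (h : Fin n → Option Bool) : Prop :=
  IsTrapSpace f h ∧ ∀ h', IsTrapSpace f h' → ¬ (vertices h' ⊂ vertices h)

/-- `h` is the smallest trap space of `f` containing the configuration `x` (i.e. `TS_f(x)`). -/
def IsSmallestTrapSpace {n : ℕ} (f : (Fin n → Bool) → (Fin n → Bool))
    (x : Fin n → Bool) (h : Fin n → Option Bool) : Prop :=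
  IsTrapSpace f h ∧ x ∈ vertices h ∧
    ∀ h', IsTrapSpace f h' → x ∈ vertices h' → vertices h ⊆ vertices h'

/-- A configuration `x` matches a marker `M`. -/
def confMatches {n : ℕ} (x : Fin n → Bool) (M : Fin n → Option Bool) : Prop :=
  ∀ (i : Fin n) (b : Bool), M i = some b → x i = b

/-- A subcube `h` matches a marker `M`. -/
def subcubeMatches {n : ℕ} (h M : Fin n → Option Bool) : Prop :=
  ∀ (i : Fin n) (b : Bool), M i = some b → h i = some b

/-- The perturbed Boolean network `f/P`. -/
def perturb {n : ℕ} (f : (Fin n → Bool) → (Fin n → Bool))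
    (P : Fin n → Option Bool) : (Fin n → Bool) → (Fin n → Bool) :=
  fun x i => (P i).getD (f x i)

/-!
Every vertex `y` has a smallest trap space, namely the meet of all trap spaces containing `y`
(subcubes sharing a vertex meet in a subcube, and the cube is finite). A minimal trap space
containing `x` must then coincide with `TS_f(x)` and with `TS_f(y)` for each of its vertices `y`.
Conversely, if `TS_f(y) = TS_f(x)` for all `y ∈ TS_f(x)`, a trap space strictly inside `TS_f(x)`
would contain some `y` whose smallest trap space `TS_f(y) = TS_f(x)` does not fit inside it.
-/

lemma vertices_nonempty {n : ℕ} (h : Fin n → Option Bool) : (vertices h).Nonempty :=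
  ⟨fun i => (h i).getD false, fun i b hb => by simp [hb]⟩

lemma vertices_or_eq_inter {n : ℕ} {h h' : Fin n → Option Bool} {y : Fin n → Bool}
    (hy : y ∈ vertices h) (hy' : y ∈ vertices h') :
    vertices (fun i => (h i).or (h' i)) = vertices h ∩ vertices h' := by
  ext z
  constructor
  · intro hz
    refine ⟨fun i b hb => hz i b (by simp [hb]), fun i b hb => ?_⟩
    cases hhi : h i with
    | none => exact hz i b (by simp [hhi, hb])
    | some c =>
      obtain rfl : c = b := (hy i c hhi).symm.trans (hy' i b hb)
      exact hz i c (by simp [hhi])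
  · rintro ⟨hz, hz'⟩ i b hb
    cases hhi : h i with
    | none => exact hz' i b (by simpa [hhi] using hb)
    | some c =>
      obtain rfl : c = b := by simpa [hhi] using hb
      exact hz i c hhi

lemma exists_isSmallestTrapSpace {n : ℕ} (f : (Fin n → Bool) → (Fin n → Bool))
    (y : Fin n → Bool) : ∃ h, IsSmallestTrapSpace f y h := by
  classical
  set traps := Finset.univ.filter (fun h => IsTrapSpace f h ∧ y ∈ vertices h)
  have htop : (fun _ => none) ∈ traps := by simp [traps, IsTrapSpace, vertices]
  obtain ⟨h, hmem, hmin⟩ := Finset.exists_min_image traps (fun h => (vertices h).ncard) ⟨_, htop⟩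
  obtain ⟨hT, hy⟩ := (Finset.mem_filter.mp hmem).2
  refine ⟨h, hT, hy, fun h' hT' hy' => ?_⟩
  have hmeet := vertices_or_eq_inter hy hy'
  have hmeet_mem : (fun i => (h i).or (h' i)) ∈ traps := by
    refine Finset.mem_filter.mpr ⟨Finset.mem_univ _, fun z hz => ?_, hmeet ▸ ⟨hy, hy'⟩⟩
    rw [hmeet] at hz ⊢
    exact ⟨hT z hz.1, hT' z hz.2⟩
  have heq : vertices h ∩ vertices h' = vertices h :=
    Set.eq_of_subset_of_ncard_le Set.inter_subset_left (hmeet ▸ hmin _ hmeet_mem)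
      (Set.toFinite _)
  exact heq ▸ Set.inter_subset_right

lemma IsMinimalTrapSpace.vertices_eq_of_subset {n : ℕ} {f : (Fin n → Bool) → (Fin n → Bool)}
    {h h' : Fin n → Option Bool} (hmin : IsMinimalTrapSpace f h) (hT' : IsTrapSpace f h')
    (hsub : vertices h' ⊆ vertices h) : vertices h' = vertices h := by
  by_contra hne
  exact hmin.2 h' hT' (hsub.ssubset_of_ne hne)

/-- characterization of membership in a minimal trap space. -/
theorem mem_minimal_trap_space_iff {n : ℕ}
    (f : (Fin n → Bool) → (Fin n → Bool)) (x : Fin n → Bool)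
    (tsx : Fin n → Option Bool) (htsx : IsSmallestTrapSpace f x tsx) :
    (∃ h : Fin n → Option Bool, IsMinimalTrapSpace f h ∧ x ∈ vertices h) ↔
      (∀ y ∈ vertices tsx, ∀ tsy : Fin n → Option Bool,
        IsSmallestTrapSpace f y tsy → vertices tsy = vertices tsx) := by
  constructor
  · rintro ⟨h, hmin, hx⟩ y hy tsy htsy
    have htsx_eq : vertices tsx = vertices h :=
      hmin.vertices_eq_of_subset htsx.1 (htsx.2.2 h hmin.1 hx)
    have htsy_eq : vertices tsy = vertices h :=
      hmin.vertices_eq_of_subset htsy.1 (htsx_eq ▸ htsy.2.2 tsx htsx.1 hy)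
    rw [htsy_eq, htsx_eq]
  · intro H
    refine ⟨tsx, ⟨htsx.1, fun h' hT' hss => ?_⟩, htsx.2.1⟩
    obtain ⟨y, hy⟩ := vertices_nonempty h'
    obtain ⟨tsy, htsy⟩ := exists_isSmallestTrapSpace f y
    have htsy_sub : vertices tsy ⊆ vertices h' := htsy.2.2 h' hT' hy
    rw [H y (hss.subset hy) tsy htsy] at htsy_sub
    exact hss.not_subset htsy_sub
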